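/- arXiv:1908.06591 — 7 statements merged into one kernel-verified Lean document; each statement's English description precedes it below -/
import Mathlib

section
/- For each integer k ≥ 1 there exists a constant C_k > 0 such that for every integer n ≥ 1, E[|u_n|^k] ≤ C_k n^{−k/4}, where u_n = −log X_n + (1/2) log n and X_n has the Gamma distribution of shape √n + 1/2 and rate 1. -/
/-!
For `x > 0` and an integer `m ≥ 1`, the Taylor bound `|t| ^ k ≤ k! * (exp t + exp (-t))` at
`t = m * log (x / s)` gives `m ^ k * |log x - log s| ^ k ≤ k! * ((x / s) ^ m + (s / x) ^ m)`.
The moments `E[X ^ (± m)]` of a Gamma variable are ratios of Gamma values, bounded by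
`(a ± m) ^ (± m)` through `Γ (b + 1) = b Γ b`. For `a = s + 1/2` and `m ^ 2 ≤ s` both
`((a + m) / s) ^ m` and `(s / (a - m)) ^ m` are at most `exp (2 m ^ 2 / s) ≤ e ^ 2`, so
`E |log X - log s| ^ k ≤ 2 e ^ 2 k! / m ^ k`. Taking `s = √n` and `m = ⌊n ^ (1/4)⌋` gives the
rate `n ^ (-k/4)`.
-/

open MeasureTheory ProbabilityTheory Real
open scoped ENNReal Nat

namespace Real

lemma pow_mul_Gamma_le_Gamma_add_nat {b : ℝ} (hb : 0 < b) (m : ℕ) :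
    b ^ m * Gamma b ≤ Gamma (b + m) := by
  induction m with
  | zero => simp
  | succ m ih =>
    rw [Nat.cast_succ, ← add_assoc, Gamma_add_one (by positivity), pow_succ', mul_assoc]
    have : b ≤ b + m := by simp
    gcongr

lemma Gamma_add_nat_le_pow_mul_Gamma {b : ℝ} (hb : 0 < b) (m : ℕ) :
    Gamma (b + m) ≤ (b + m) ^ m * Gamma b := by
  induction m with
  | zero => simp
  | succ m ih =>
    rw [Nat.cast_succ, ← add_assoc, Gamma_add_one (by positivity), pow_succ', mul_assoc]
    have hbm : b + m ≤ b + m + 1 := by linarith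
    have hpow : (b + m) ^ m ≤ (b + m + 1) ^ m := pow_le_pow_left₀ (by positivity) hbm m
    have hΓ := (Gamma_pos_of_pos hb).le
    calc (b + m) * Gamma (b + m) ≤ (b + m) * ((b + m) ^ m * Gamma b) := by gcongr
      _ ≤ (b + m + 1) * ((b + m + 1) ^ m * Gamma b) := by gcongr

lemma pow_abs_le_factorial_mul_exp_add_exp_neg (t : ℝ) (k : ℕ) :
    |t| ^ k ≤ k ! * (exp t + exp (-t)) := by
  have h := pow_div_factorial_le_exp (x := |t|) (abs_nonneg t) k
  rw [div_le_iff₀ (by positivity)] at h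
  have : exp |t| ≤ exp t + exp (-t) := by
    rcases abs_cases t with ⟨h, _⟩ | ⟨h, _⟩ <;> rw [h] <;> linarith [exp_pos t, exp_pos (-t)]
  nlinarith [Nat.factorial_pos k]

lemma natCast_pow_mul_pow_abs_log_le {y : ℝ} (hy : 0 < y) (m k : ℕ) :
    (m : ℝ) ^ k * |log y| ^ k ≤ k ! * (y ^ m + (y ^ m)⁻¹) := by
  have h := pow_abs_le_factorial_mul_exp_add_exp_neg (m * log y) k
  rwa [abs_mul, Nat.abs_cast, mul_pow, exp_neg, exp_nat_mul, exp_log hy] at h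

lemma pow_le_exp_nat_mul_of_le_one_add {b c : ℝ} (hb : 0 ≤ b) (h : b ≤ 1 + c) (m : ℕ) :
    b ^ m ≤ exp (m * c) := by
  rw [exp_nat_mul]
  exact pow_le_pow_left₀ hb (h.trans (by linarith [add_one_le_exp c])) m

end Real

namespace ProbabilityTheory

lemma measurable_gammaPDF (a r : ℝ) : Measurable (gammaPDF a r) :=
  (measurable_gammaPDFReal a r).ennreal_ofReal

lemma gammaMeasure_ae_pos (a r : ℝ) : ∀ᵐ x ∂gammaMeasure a r, 0 < x := by
  rw [ae_iff, show {x : ℝ | ¬0 < x} = Set.Iic 0 by ext; simp, gammaMeasure,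
    withDensity_apply _ measurableSet_Iic, setLIntegral_congr Iio_ae_eq_Iic.symm]
  exact (setLIntegral_eq_zero_iff measurableSet_Iio (measurable_gammaPDF a r)).mpr
    (ae_of_all _ fun x hx => gammaPDF_of_neg hx)

lemma gammaPDFReal_mul_rpow {a r p x : ℝ} (hr : 0 < r) (hap : 0 < a + p) (hx : 0 < x) :
    gammaPDFReal a r x * x ^ p =
      Gamma (a + p) / (Gamma a * r ^ p) * gammaPDFReal (a + p) r x := by
  have hΓ : Gamma (a + p) ≠ 0 := (Gamma_pos_of_pos hap).ne'
  simp only [gammaPDFReal, if_pos hx.le]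
  rw [rpow_add hr, show a + p - 1 = (a - 1) + p by ring, rpow_add hx]
  field_simp

lemma lintegral_rpow_gammaMeasure {a r p : ℝ} (ha : 0 < a) (hr : 0 < r) (hap : 0 < a + p) :
    ∫⁻ x, ENNReal.ofReal (x ^ p) ∂gammaMeasure a r =
      ENNReal.ofReal (Gamma (a + p) / (Gamma a * r ^ p)) := by
  have hc : 0 ≤ Gamma (a + p) / (Gamma a * r ^ p) := by
    have := Gamma_pos_of_pos ha; have := Gamma_pos_of_pos hap; positivity
  rw [gammaMeasure, lintegral_withDensity_eq_lintegral_mul _ (measurable_gammaPDF a r)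
    (by fun_prop)]
  calc _ = ∫⁻ x, ENNReal.ofReal (Gamma (a + p) / (Gamma a * r ^ p)) * gammaPDF (a + p) r x := by
        refine lintegral_congr_ae ?_
        filter_upwards [(Set.countable_singleton (0 : ℝ)).ae_notMem volume] with x hx
        rcases lt_or_gt_of_ne hx with hneg | hpos
        · simp [gammaPDF_of_neg hneg]
        · rw [Pi.mul_apply, gammaPDF, gammaPDF, ← ENNReal.ofReal_mul (gammaPDFReal_nonneg ha hr x),
            ← ENNReal.ofReal_mul hc, gammaPDFReal_mul_rpow hr hap hpos]
    _ = _ := by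
        rw [lintegral_const_mul _ (measurable_gammaPDF _ r), lintegral_gammaPDF_eq_one hap hr,
          mul_one]

lemma lintegral_pow_gammaMeasure_le {a r : ℝ} (ha : 0 < a) (hr : 0 < r) (m : ℕ) :
    ∫⁻ x, ENNReal.ofReal (x ^ m) ∂gammaMeasure a r ≤ ENNReal.ofReal (((a + m) / r) ^ m) := by
  have h := lintegral_rpow_gammaMeasure (p := m) ha hr (by positivity)
  simp only [rpow_natCast] at h
  rw [h, div_pow]
  refine ENNReal.ofReal_le_ofReal ?_
  rw [div_le_div_iff₀ (by have := Gamma_pos_of_pos ha; positivity) (by positivity)]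
  nlinarith [Gamma_add_nat_le_pow_mul_Gamma ha m, pow_pos hr m]

lemma lintegral_inv_pow_gammaMeasure_le {a r : ℝ} (hr : 0 < r) {m : ℕ} (hm : (m : ℝ) < a) :
    ∫⁻ x, ENNReal.ofReal ((x ^ m)⁻¹) ∂gammaMeasure a r ≤ ENNReal.ofReal ((r / (a - m)) ^ m) := by
  have ham : 0 < a - m := by linarith
  have h := lintegral_rpow_gammaMeasure (p := -m) (by linarith) hr (by linarith)
  rw [lintegral_congr_ae ((gammaMeasure_ae_pos a r).mono fun x hx => by
    rw [← rpow_natCast, ← rpow_neg hx.le]), h, ← sub_eq_add_neg, rpow_neg hr.le, rpow_natCast]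
  refine ENNReal.ofReal_le_ofReal ?_
  have hΓ := Gamma_pos_of_pos ham
  have hΓa := Gamma_pos_of_pos (show 0 < a by linarith)
  have h' := pow_mul_Gamma_le_Gamma_add_nat ham m
  rw [sub_add_cancel] at h'
  rw [div_pow, div_le_div_iff₀ (by positivity) (by positivity), mul_comm (Gamma a),
    mul_inv_cancel_left₀ (by positivity)]
  linarith

lemma lintegral_abs_log_sub_log_pow_le {a r s : ℝ} (hr : 0 < r) (hs : 0 < s) {m : ℕ}
    (hm0 : 0 < m) (hm : (m : ℝ) < a) (k : ℕ) :
    ∫⁻ x, ENNReal.ofReal (|log x - log s| ^ k) ∂gammaMeasure a r ≤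
      ENNReal.ofReal (k ! / m ^ k * (((a + m) / (r * s)) ^ m + (r * s / (a - m)) ^ m)) := by
  have ha : 0 < a := by linarith
  set A : ℝ := k ! / m ^ k / s ^ m
  set B : ℝ := k ! / m ^ k * s ^ m
  have hpoint : ∀ x : ℝ, 0 < x → |log x - log s| ^ k ≤ A * x ^ m + B * (x ^ m)⁻¹ := by
    intro x hx
    have h := natCast_pow_mul_pow_abs_log_le (div_pos hx hs) m k
    rw [log_div hx.ne' hs.ne', ← le_div_iff₀' (by positivity)] at h
    refine h.trans (le_of_eq ?_)
    simp only [A, B, div_pow]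
    field_simp
  calc ∫⁻ x, ENNReal.ofReal (|log x - log s| ^ k) ∂gammaMeasure a r
      ≤ ∫⁻ x, ENNReal.ofReal A * ENNReal.ofReal (x ^ m) +
          ENNReal.ofReal B * ENNReal.ofReal ((x ^ m)⁻¹) ∂gammaMeasure a r := by
        refine lintegral_mono_ae ((gammaMeasure_ae_pos a r).mono fun x hx => ?_)
        rw [← ENNReal.ofReal_mul (by positivity), ← ENNReal.ofReal_mul (by positivity),
          ← ENNReal.ofReal_add (by positivity) (by positivity)]
        exact ENNReal.ofReal_le_ofReal (hpoint x hx)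
    _ = ENNReal.ofReal A * ∫⁻ x, ENNReal.ofReal (x ^ m) ∂gammaMeasure a r +
          ENNReal.ofReal B * ∫⁻ x, ENNReal.ofReal ((x ^ m)⁻¹) ∂gammaMeasure a r := by
        rw [lintegral_add_left (by fun_prop), lintegral_const_mul _ (by fun_prop),
          lintegral_const_mul _ (by fun_prop)]
    _ ≤ ENNReal.ofReal A * ENNReal.ofReal (((a + m) / r) ^ m) +
          ENNReal.ofReal B * ENNReal.ofReal ((r / (a - m)) ^ m) := by
        gcongr
        · exact lintegral_pow_gammaMeasure_le ha hr m
        · exact lintegral_inv_pow_gammaMeasure_le hr hm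
    _ = _ := by
        have ham : 0 < a - m := by linarith
        rw [← ENNReal.ofReal_mul (by positivity), ← ENNReal.ofReal_mul (by positivity),
          ← ENNReal.ofReal_add (by positivity) (by positivity)]
        congr 1
        simp only [A, B, div_pow, mul_pow]
        field_simp

end ProbabilityTheory

lemma div_pow_add_div_pow_le_two_mul_exp_two {s : ℝ} {m : ℕ} (hm : 0 < m)
    (hms : (m : ℝ) ^ 2 ≤ s) :
    ((s + 1 / 2 + m) / s) ^ m + (s / (s + 1 / 2 - m)) ^ m ≤ 2 * exp 2 := by
  have hm1 : (1 : ℝ) ≤ m := by exact_mod_cast hm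
  have hs : 0 < s := by nlinarith
  have hsm : 0 < s + 1 / 2 - m := by nlinarith
  have hexp : exp (m * (2 * m / s)) ≤ exp 2 := by
    rw [exp_le_exp, ← mul_div_assoc, div_le_iff₀ hs]; nlinarith
  have h1 : ((s + 1 / 2 + m) / s) ^ m ≤ exp 2 := by
    refine (pow_le_exp_nat_mul_of_le_one_add (by positivity) ?_ m).trans hexp
    rw [div_le_iff₀ hs]; field_simp; linarith
  have h2 : (s / (s + 1 / 2 - m)) ^ m ≤ exp 2 := by
    refine (pow_le_exp_nat_mul_of_le_one_add (by positivity) ?_ m).trans hexp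
    rw [div_le_iff₀ hsm]; field_simp; nlinarith
  linarith

lemma exists_nat_sq_le_sqrt_and_inv_pow_le {n : ℕ} (hn : 1 ≤ n) (k : ℕ) :
    ∃ m : ℕ, 0 < m ∧ (m : ℝ) ^ 2 ≤ √n ∧ ((m : ℝ) ^ k)⁻¹ ≤ 2 ^ k * (n : ℝ) ^ (-(k : ℝ) / 4) := by
  have hn' : (1 : ℝ) ≤ n := by exact_mod_cast hn
  set y : ℝ := (n : ℝ) ^ (1 / 4 : ℝ)
  have hy : 1 ≤ y := one_le_rpow hn' (by norm_num)
  have hmy : (⌊y⌋₊ : ℝ) ≤ y := Nat.floor_le (by linarith)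
  have hym : y ≤ 2 * ⌊y⌋₊ := by
    have := Nat.lt_floor_add_one y
    have : (1 : ℝ) ≤ ⌊y⌋₊ := by exact_mod_cast Nat.le_floor (by exact_mod_cast hy)
    linarith
  refine ⟨⌊y⌋₊, Nat.floor_pos.mpr hy, ?_, ?_⟩
  · calc (⌊y⌋₊ : ℝ) ^ 2 ≤ y ^ 2 := by gcongr
      _ = √n := by
        rw [← rpow_natCast, ← rpow_mul (by positivity), sqrt_eq_rpow]; norm_num
  · have hyk : (n : ℝ) ^ (-(k : ℝ) / 4) = (y ^ k)⁻¹ := by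
      rw [← rpow_natCast, ← rpow_mul (by positivity), ← rpow_neg (by positivity)]; ring_nf
    have hm : (0 : ℝ) < ⌊y⌋₊ := by linarith
    rw [hyk, ← div_eq_mul_inv, le_div_iff₀ (pow_pos (by linarith) k), ← div_eq_inv_mul,
      div_le_iff₀ (pow_pos hm k), ← mul_pow]
    gcongr

theorem stmt_1_general (k : ℕ) :
    ∃ C : ℝ, 0 < C ∧ ∀ n : ℕ, 1 ≤ n →
      ∫ x, |(-Real.log x + (1 / 2) * Real.log n)| ^ k
          ∂(gammaMeasure (Real.sqrt n + 1 / 2) 1)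
        ≤ C * (n : ℝ) ^ (-(k : ℝ) / 4) := by
  refine ⟨k ! * (2 * exp 2) * 2 ^ k, by positivity, fun n hn => ?_⟩
  obtain ⟨m, hm0, hms, hmk⟩ := exists_nat_sq_le_sqrt_and_inv_pow_le hn k
  have hs : 0 < √(n : ℝ) := sqrt_pos.mpr (by exact_mod_cast hn)
  have hma : (m : ℝ) < √n + 1 / 2 := by
    have : (1 : ℝ) ≤ m := by exact_mod_cast hm0
    nlinarith
  have hu (x : ℝ) : |-log x + 1 / 2 * log n| = |log x - log √n| := by
    rw [log_sqrt (Nat.cast_nonneg n), ← abs_neg]; ring_nf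
  rw [integral_eq_lintegral_of_nonneg_ae (ae_of_all _ fun _ => by positivity) (by fun_prop)]
  refine ENNReal.toReal_le_of_le_ofReal (by positivity) ?_
  simp_rw [hu]
  refine (lintegral_abs_log_sub_log_pow_le one_pos hs hm0 hma k).trans
    (ENNReal.ofReal_le_ofReal ?_)
  rw [one_mul]
  calc k ! / m ^ k * (((√n + 1 / 2 + m) / √n) ^ m + (√n / (√n + 1 / 2 - m)) ^ m)
      ≤ k ! / m ^ k * (2 * exp 2) := by
        gcongr
        exact div_pow_add_div_pow_le_two_mul_exp_two hm0 hms
    _ = k ! * (2 * exp 2) * ((m : ℝ) ^ k)⁻¹ := by ring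
    _ ≤ k ! * (2 * exp 2) * (2 ^ k * (n : ℝ) ^ (-(k : ℝ) / 4)) := by gcongr
    _ = _ := by ring

/-- For each integer `k ≥ 1` there is `C_k > 0` with
`E[|u_n|^k] ≤ C_k n^{-k/4}` for all `n ≥ 1`, where `u_n = -log X_n + (1/2) log n`
and `X_n ~ Gamma(√n + 1/2, 1)`. -/
theorem stmt_1 (k : ℕ) (hk : 1 ≤ k) :
    ∃ C : ℝ, 0 < C ∧ ∀ n : ℕ, 1 ≤ n →
      ∫ x, |(-Real.log x + (1 / 2) * Real.log n)| ^ k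
          ∂(gammaMeasure (Real.sqrt n + 1 / 2) 1)
        ≤ C * (n : ℝ) ^ (-(k : ℝ) / 4) :=
  stmt_1_general k
end

section
/- For each integer k ≥ 1 there exists a constant C_k > 0 such that for every integer n ≥ 1, E[|W_n|^k] ≤ C_k n^{−k/4}, where W_n = 1 − e^{−u_n} = 1 − n^{−1/2} X_n, u_n = −log X_n + (1/2) log n, and X_n has the Gamma distribution of shape √n + 1/2 and rate 1. -/
/-!
Write `s = √n` and `X ~ Gamma(s + 1/2, 1)`, so that `W = -(X - s)/s`. For `|t| ≤ 1/2` the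
centred moment generating function is `E exp(t(X - s)) = exp(-ts) (1 - t)^{-(s + 1/2)}`, whose
logarithm is at most `(s + 1/2)(t + 2t²) - ts = 2st² + t/2 + t²`; at `t = ±1/(2 n^{1/4})` this
is at most `1`. Since `|y|^k ≤ k! (e^y + e^{-y})`, taking `y = t(X - s)` gives
`E|X - s|^k ≤ 2e k! (2 n^{1/4})^k`, that is `E|W|^k ≤ 2e k! 2^k n^{-k/4}`.
-/

open MeasureTheory ProbabilityTheory Real
open scoped Nat

lemma abs_pow_le_factorial_mul_exp_add_exp (x : ℝ) (k : ℕ) :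
    |x| ^ k ≤ k ! * (exp x + exp (-x)) := by
  have h := pow_div_factorial_le_exp _ (abs_nonneg x) k
  rw [div_le_iff₀ (by positivity), mul_comm] at h
  exact h.trans (mul_le_mul_of_nonneg_left (exp_abs_le x) (by positivity))

lemma integral_abs_mul_pow_le_mgf {Ω : Type*} [MeasurableSpace Ω] {μ : Measure Ω}
    {X : Ω → ℝ} {t : ℝ} (hpos : Integrable (fun ω ↦ exp (t * X ω)) μ)
    (hneg : Integrable (fun ω ↦ exp (-t * X ω)) μ) (k : ℕ) :
    ∫ ω, |t * X ω| ^ k ∂μ ≤ k ! * (mgf X μ t + mgf X μ (-t)) := by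
  rw [mgf, mgf, ← integral_add hpos hneg, ← integral_const_mul]
  refine integral_mono_of_nonneg (ae_of_all _ fun ω ↦ by positivity)
    ((hpos.add hneg).const_mul _) (ae_of_all _ fun ω ↦ ?_)
  simpa only [neg_mul] using abs_pow_le_factorial_mul_exp_add_exp (t * X ω) k

lemma gammaPDF_mul_exp {a r t : ℝ} (hr : 0 ≤ r) (ht : t < r) (x : ℝ) :
    gammaPDF a r x * ENNReal.ofReal (exp (t * x)) =
      ENNReal.ofReal ((r / (r - t)) ^ a) * gammaPDF a (r - t) x := by
  have hrt : 0 < r - t := sub_pos.2 ht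
  rw [gammaPDF, gammaPDF, ← ENNReal.ofReal_mul' (exp_pos _).le,
    ← ENNReal.ofReal_mul (by positivity)]
  congr 1
  unfold gammaPDFReal
  split_ifs
  · rw [div_rpow hr hrt.le, show -((r - t) * x) = -(r * x) + t * x by ring, exp_add]
    field_simp
  · simp

lemma lintegral_exp_mul_gammaMeasure {a r t : ℝ} (ha : 0 < a) (hr : 0 ≤ r) (ht : t < r) :
    ∫⁻ x, ENNReal.ofReal (exp (t * x)) ∂gammaMeasure a r =
      ENNReal.ofReal ((r / (r - t)) ^ a) := by
  rw [gammaMeasure, lintegral_withDensity_eq_lintegral_mul (f := gammaPDF a r) _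
    (measurable_gammaPDFReal a r).ennreal_ofReal (by fun_prop)]
  simp only [Pi.mul_apply, gammaPDF_mul_exp hr ht]
  rw [lintegral_const_mul (f := gammaPDF a (r - t)) _
      (measurable_gammaPDFReal a _).ennreal_ofReal,
    lintegral_gammaPDF_eq_one ha (sub_pos.2 ht), mul_one]

lemma integrable_exp_mul_gammaMeasure {a r t : ℝ} (ha : 0 < a) (hr : 0 ≤ r) (ht : t < r) :
    Integrable (fun x ↦ exp (t * x)) (gammaMeasure a r) := by
  refine ⟨by fun_prop, ?_⟩
  rw [hasFiniteIntegral_iff_ofReal (ae_of_all _ fun x ↦ (exp_pos _).le),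
    lintegral_exp_mul_gammaMeasure ha hr ht]
  exact ENNReal.ofReal_lt_top

lemma mgf_id_gammaMeasure {a r t : ℝ} (ha : 0 < a) (hr : 0 ≤ r) (ht : t < r) :
    mgf id (gammaMeasure a r) t = (r / (r - t)) ^ a := by
  rw [mgf, integral_eq_lintegral_of_nonneg_ae (ae_of_all _ fun x ↦ (exp_pos _).le)
    (by fun_prop)]
  simp only [id, lintegral_exp_mul_gammaMeasure ha hr ht]
  exact ENNReal.toReal_ofReal (by have := sub_pos.2 ht; positivity)

lemma neg_log_one_sub_le {t : ℝ} (ht : |t| ≤ 1 / 2) : -log (1 - t) ≤ t + 2 * t ^ 2 := by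
  have h := abs_log_sub_add_sum_range_le (ht.trans_lt (by norm_num)) 1
  norm_num only [Finset.range_one, Finset.sum_singleton, pow_one, div_one] at h
  have h2 : |t| ^ 2 / (1 - |t|) ≤ 2 * t ^ 2 := by
    rw [div_le_iff₀ (by linarith), sq_abs]; nlinarith [sq_nonneg t]
  linarith [neg_abs_le (t + log (1 - t))]

lemma mgf_sub_gammaMeasure_le {s t : ℝ} (hs : 0 ≤ s) (ht : |t| ≤ 1 / 2)
    (hst : s * t ^ 2 ≤ 1 / 4) :
    mgf (fun x ↦ x - s) (gammaMeasure (s + 1 / 2) 1) t ≤ exp 1 := by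
  have ht1 : t < 1 := by linarith [le_abs_self t]
  simp_rw [sub_eq_add_neg]
  rw [mgf_add_const, show mgf (fun x ↦ x) _ t = mgf id _ t from rfl,
    mgf_id_gammaMeasure (by linarith) zero_le_one ht1, one_div,
    rpow_def_of_pos (inv_pos.2 (by linarith)), log_inv, ← exp_add, exp_le_exp]
  have hlog := mul_le_mul_of_nonneg_left (neg_log_one_sub_le ht) (by linarith : 0 ≤ s + 1 / 2)
  have ht2 : t ^ 2 ≤ 1 / 4 := by nlinarith [sq_abs t, abs_nonneg t]
  nlinarith [le_abs_self t]

lemma integral_abs_one_sub_div_sq_pow_le {q : ℝ} (hq : 1 ≤ q) (k : ℕ) :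
    ∫ x, |1 - x / q ^ 2| ^ k ∂gammaMeasure (q ^ 2 + 1 / 2) 1 ≤
      2 * exp 1 * k ! * (2 / q) ^ k := by
  set t := (2 * q)⁻¹
  have hq0 : 0 < q := by linarith
  have ht : |t| ≤ 1 / 2 := by
    rw [abs_of_pos (by positivity), inv_le_comm₀ (by positivity) (by norm_num)]; linarith
  have hqt : q ^ 2 * t ^ 2 = 1 / 4 := by
    rw [← mul_pow, show q * t = 1 / 2 by simp only [t]; field_simp]; norm_num
  have hint : ∀ u, |u| ≤ 1 / 2 →
      Integrable (fun x ↦ exp (u * (x - q ^ 2))) (gammaMeasure (q ^ 2 + 1 / 2) 1) := by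
    intro u hu
    refine ((integrable_exp_mul_gammaMeasure (t := u) (by positivity) zero_le_one
      (by linarith [le_abs_self u])).const_mul (exp (-(u * q ^ 2)))).congr
      (ae_of_all _ fun x ↦ ?_)
    dsimp only; rw [← exp_add]; ring_nf
  have hmoment := integral_abs_mul_pow_le_mgf (hint t ht) (hint (-t) (by rwa [abs_neg])) k
  have hmgf : mgf (fun x ↦ x - q ^ 2) (gammaMeasure (q ^ 2 + 1 / 2) 1) t +
      mgf (fun x ↦ x - q ^ 2) (gammaMeasure (q ^ 2 + 1 / 2) 1) (-t) ≤ 2 * exp 1 := by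
    linarith [mgf_sub_gammaMeasure_le (sq_nonneg q) ht hqt.le,
      mgf_sub_gammaMeasure_le (sq_nonneg q) (t := -t) (by rwa [abs_neg])
        (by rw [neg_sq]; exact hqt.le)]
  have hrescale : ∀ x, |1 - x / q ^ 2| ^ k = (2 / q) ^ k * |t * (x - q ^ 2)| ^ k := by
    intro x
    rw [← abs_of_pos (by positivity : 0 < 2 / q), ← mul_pow, ← abs_mul, ← abs_neg]
    congr 2
    simp only [t]
    field_simp
    ring
  calc ∫ x, |1 - x / q ^ 2| ^ k ∂gammaMeasure (q ^ 2 + 1 / 2) 1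
      = (2 / q) ^ k * ∫ x, |t * (x - q ^ 2)| ^ k ∂gammaMeasure (q ^ 2 + 1 / 2) 1 := by
        simp_rw [hrescale, integral_const_mul]
    _ ≤ (2 / q) ^ k * (k ! * (2 * exp 1)) := by
        gcongr
        exact hmoment.trans (mul_le_mul_of_nonneg_left hmgf (by positivity))
    _ = 2 * exp 1 * k ! * (2 / q) ^ k := by ring

theorem stmt_2_general (k : ℕ) :
    ∃ C : ℝ, 0 < C ∧ ∀ n : ℕ, 1 ≤ n →
      ∫ x, |1 - x / Real.sqrt n| ^ k ∂(gammaMeasure (Real.sqrt n + 1 / 2) 1)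
        ≤ C * (n : ℝ) ^ (-(k : ℝ) / 4) := by
  refine ⟨2 * exp 1 * k ! * 2 ^ k, by positivity, fun n hn ↦ ?_⟩
  have hn0 : (0 : ℝ) ≤ n := n.cast_nonneg
  set q : ℝ := (n : ℝ) ^ (1 / 4 : ℝ)
  have hq : 1 ≤ q := one_le_rpow (by exact_mod_cast hn) (by norm_num)
  have hsqrt : Real.sqrt n = q ^ 2 := by
    rw [sqrt_eq_rpow, ← rpow_natCast, ← rpow_mul hn0]; norm_num
  have hpow : (2 / q) ^ k = 2 ^ k * (n : ℝ) ^ (-(k : ℝ) / 4) := by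
    have hqk : q ^ k = (n : ℝ) ^ ((k : ℝ) / 4) := by
      rw [← rpow_natCast, ← rpow_mul hn0]; ring_nf
    rw [div_pow, hqk, div_eq_mul_inv, ← rpow_neg hn0, neg_div]
  rw [hsqrt]
  calc _ ≤ 2 * exp 1 * k ! * (2 / q) ^ k := integral_abs_one_sub_div_sq_pow_le hq k
    _ = 2 * exp 1 * k ! * 2 ^ k * (n : ℝ) ^ (-(k : ℝ) / 4) := by rw [hpow]; ring

/-- For each integer `k ≥ 1` there is `C_k > 0` with
`E[|W_n|^k] ≤ C_k n^{-k/4}` for all `n ≥ 1`, where `W_n = 1 - n^{-1/2} X_n`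
and `X_n ~ Gamma(√n + 1/2, 1)`. -/
theorem stmt_2 (k : ℕ) (hk : 1 ≤ k) :
    ∃ C : ℝ, 0 < C ∧ ∀ n : ℕ, 1 ≤ n →
      ∫ x, |1 - x / Real.sqrt n| ^ k ∂(gammaMeasure (Real.sqrt n + 1 / 2) 1)
        ≤ C * (n : ℝ) ^ (-(k : ℝ) / 4) :=
  stmt_2_general k
end

section
/- Let ν > 0 and let X have the Gamma distribution of shape ν and rate 1. Then the random variable log X is integrable and square-integrable, E[log X] = Ψ₀(ν) where Ψ₀ = Γ'/Γ is the digamma function, and Var[log X] = Ψ₁(ν) where Ψ₁ = Ψ₀' is the trigamma function. Equivalently, ∫₀^∞ (log x) x^{ν−1} e^{−x} dx = Γ'(ν) and ∫₀^∞ (log x − Γ'(ν)/Γ(ν))² x^{ν−1} e^{−x}/Γ(ν) dx equals the derivative of ν ↦ Γ'(ν)/Γ(ν) at ν. -/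
/-!
Differentiating `Γ(s) = ∫₀^∞ x^(s-1) e^(-x) dx` under the integral sign gives
`Γ⁽ⁿ⁾(s) = ∫₀^∞ (log x)ⁿ x^(s-1) e^(-x) dx`; the domination comes from
`|log x|ⁿ ≤ C (x^δ + x^(-δ))`, which reduces everything to convergent Gamma integrals.
Hence `E[(log X)ⁿ] = Γ⁽ⁿ⁾(ν) / Γ(ν)`, and `Var[log X] = Γ''/Γ - (Γ'/Γ)² = (Γ'/Γ)'`.
-/

open MeasureTheory ProbabilityTheory Real Set Filter

lemma log_pow_le_rpow_of_log_nonneg {n : ℕ} (hn : n ≠ 0) {δ y : ℝ} (hδ : 0 < δ) (hy : 0 < y)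
    (hlog : 0 ≤ log y) : log y ^ n ≤ ((n : ℝ) / δ) ^ n * y ^ δ := by
  have hε : 0 < δ / n := by positivity
  calc log y ^ n ≤ (y ^ (δ / n) / (δ / n)) ^ n :=
        pow_le_pow_left₀ hlog (log_le_rpow_div hy.le hε) n
    _ = ((n : ℝ) / δ) ^ n * y ^ δ := by
        rw [div_pow, ← rpow_natCast (y ^ (δ / n)), ← rpow_mul hy.le,
          div_mul_cancel₀ δ (Nat.cast_ne_zero.2 hn), div_eq_mul_inv, ← inv_pow, inv_div, mul_comm]

lemma abs_log_pow_le {n : ℕ} (hn : n ≠ 0) {δ x : ℝ} (hδ : 0 < δ) (hx : 0 < x) :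
    |log x| ^ n ≤ ((n : ℝ) / δ) ^ n * (x ^ δ + x ^ (-δ)) := by
  have h₀ : 0 ≤ ((n : ℝ) / δ) ^ n := by positivity
  rcases abs_choice (log x) with h | h
  · have := log_pow_le_rpow_of_log_nonneg hn hδ hx (h ▸ abs_nonneg _)
    rw [h]
    nlinarith [rpow_nonneg hx.le (-δ)]
  · have := log_pow_le_rpow_of_log_nonneg hn hδ (inv_pos.2 hx)
      (by rw [log_inv, ← h]; exact abs_nonneg _)
    rw [log_inv, inv_rpow hx.le, ← rpow_neg hx.le] at this
    rw [h]
    nlinarith [rpow_nonneg hx.le δ]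

lemma integrableOn_abs_log_pow_mul_rpow_mul_exp (n : ℕ) {s : ℝ} (hs : 0 < s) :
    IntegrableOn (fun x => |log x| ^ n * (x ^ (s - 1) * exp (-x))) (Ioi 0) := by
  rcases eq_or_ne n 0 with rfl | hn
  · simpa [mul_comm] using GammaIntegral_convergent hs
  have hdom : IntegrableOn (fun x => ((n : ℝ) / (s / 2)) ^ n *
      (exp (-x) * x ^ (s + s / 2 - 1) + exp (-x) * x ^ (s - s / 2 - 1))) (Ioi 0) :=
    ((GammaIntegral_convergent (by linarith)).add
      (GammaIntegral_convergent (by linarith))).const_mul _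
  refine hdom.mono' (by fun_prop) ?_
  filter_upwards [ae_restrict_mem measurableSet_Ioi] with x (hx : 0 < x)
  rw [norm_of_nonneg (by positivity)]
  calc |log x| ^ n * (x ^ (s - 1) * exp (-x))
      ≤ ((n : ℝ) / (s / 2)) ^ n * (x ^ (s / 2) + x ^ (-(s / 2))) * (x ^ (s - 1) * exp (-x)) :=
        mul_le_mul_of_nonneg_right (abs_log_pow_le hn (half_pos hs) hx) (by positivity)
    _ = _ := by
        rw [show s + s / 2 - 1 = s / 2 + (s - 1) by ring, show s - s / 2 - 1 = -(s / 2) + (s - 1)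
          by ring, rpow_add hx, rpow_add hx]
        ring

lemma integrableOn_log_pow_mul_rpow_mul_exp (n : ℕ) {s : ℝ} (hs : 0 < s) :
    IntegrableOn (fun x => log x ^ n * (x ^ (s - 1) * exp (-x))) (Ioi 0) := by
  refine (integrableOn_abs_log_pow_mul_rpow_mul_exp n hs).mono' (by fun_prop) ?_
  filter_upwards [ae_restrict_mem measurableSet_Ioi] with x (hx : 0 < x)
  rw [norm_mul, norm_pow, norm_eq_abs, norm_of_nonneg (by positivity)]

lemma rpow_le_rpow_add_rpow {x a b s : ℝ} (hx : 0 < x) (has : a ≤ s) (hsb : s ≤ b) :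
    x ^ s ≤ x ^ a + x ^ b := by
  rcases le_or_gt x 1 with h | h
  · linarith [rpow_le_rpow_of_exponent_ge hx h has, rpow_nonneg hx.le b]
  · linarith [rpow_le_rpow_of_exponent_le h.le hsb, rpow_nonneg hx.le a]

/-- This is `Γ⁽ⁿ⁾(s)` for `s > 0`. -/
noncomputable def logPowGammaIntegral (n : ℕ) (s : ℝ) : ℝ :=
  ∫ x in Ioi 0, log x ^ n * (x ^ (s - 1) * exp (-x))

lemma logPowGammaIntegral_zero {s : ℝ} (hs : 0 < s) : logPowGammaIntegral 0 s = Gamma s := by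
  simp only [logPowGammaIntegral, pow_zero, one_mul, Gamma_eq_integral hs, mul_comm]

lemma hasDerivAt_logPowGammaIntegral (n : ℕ) {s : ℝ} (hs : 0 < s) :
    HasDerivAt (logPowGammaIntegral n) (logPowGammaIntegral (n + 1) s) s := by
  refine (hasDerivAt_integral_of_dominated_loc_of_deriv_le (μ := volume.restrict (Ioi 0))
    (F := fun t x => log x ^ n * (x ^ (t - 1) * exp (-x)))
    (F' := fun t x => log x ^ (n + 1) * (x ^ (t - 1) * exp (-x)))
    (bound := fun x => |log x| ^ (n + 1) * (x ^ (s / 2 - 1) * exp (-x))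
      + |log x| ^ (n + 1) * (x ^ (3 * s / 2 - 1) * exp (-x)))
    (Ioo_mem_nhds (half_lt_self hs) (by linarith : s < 3 * s / 2))
    (.of_forall fun _ => by fun_prop) (integrableOn_log_pow_mul_rpow_mul_exp n hs)
    (by fun_prop) ?_ ((integrableOn_abs_log_pow_mul_rpow_mul_exp _ (half_pos hs)).add
      (integrableOn_abs_log_pow_mul_rpow_mul_exp _ (by linarith))) ?_).2
  · filter_upwards [ae_restrict_mem measurableSet_Ioi] with x (hx : 0 < x) t ⟨hst, hts⟩
    rw [norm_mul, norm_pow, norm_eq_abs, norm_of_nonneg (by positivity), ← mul_add, ← add_mul]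
    gcongr
    exact rpow_le_rpow_add_rpow hx (by linarith) (by linarith)
  · filter_upwards [ae_restrict_mem measurableSet_Ioi] with x (hx : 0 < x) t _
    exact (((((hasDerivAt_id' t).sub_const 1).const_rpow hx).mul_const (exp (-x))).const_mul
      (log x ^ n)).congr_deriv (by ring)

lemma hasDerivAt_Gamma_eq_logPowGammaIntegral {s : ℝ} (hs : 0 < s) :
    HasDerivAt Gamma (logPowGammaIntegral 1 s) s :=
  (hasDerivAt_logPowGammaIntegral 0 hs).congr_of_eventuallyEq <|
    eventually_gt_nhds hs |>.mono fun _ ht => (logPowGammaIntegral_zero ht).symm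

lemma hasDerivAt_deriv_Gamma {s : ℝ} (hs : 0 < s) :
    HasDerivAt (deriv Gamma) (logPowGammaIntegral 2 s) s :=
  (hasDerivAt_logPowGammaIntegral 1 hs).congr_of_eventuallyEq <|
    eventually_gt_nhds hs |>.mono fun _ ht => (hasDerivAt_Gamma_eq_logPowGammaIntegral ht).deriv

lemma deriv_logDeriv_Gamma {s : ℝ} (hs : 0 < s) :
    deriv (fun t => deriv Gamma t / Gamma t) s =
      logPowGammaIntegral 2 s / Gamma s - (logPowGammaIntegral 1 s / Gamma s) ^ 2 := by
  have hΓ := hasDerivAt_Gamma_eq_logPowGammaIntegral hs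
  rw [HasDerivAt.deriv (f := fun t => deriv Gamma t / Gamma t)
    ((hasDerivAt_deriv_Gamma hs).div hΓ (Gamma_pos_of_pos hs).ne'), hΓ.deriv]
  field_simp

section gammaMeasure

variable {E : Type*} [NormedAddCommGroup E] [NormedSpace ℝ E] {a r : ℝ}

lemma gammaMeasure_eq_withDensity_toNNReal (a r : ℝ) :
    gammaMeasure a r = volume.withDensity fun x => ((gammaPDFReal a r x).toNNReal : ENNReal) :=
  rfl

lemma integral_gammaMeasure (ha : 0 < a) (hr : 0 < r) (f : ℝ → E) :
    ∫ x, f x ∂gammaMeasure a r = ∫ x, gammaPDFReal a r x • f x := by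
  rw [gammaMeasure_eq_withDensity_toNNReal,
    integral_withDensity_eq_integral_smul (measurable_gammaPDFReal a r).real_toNNReal]
  simp only [NNReal.smul_def, Real.coe_toNNReal _ (gammaPDFReal_nonneg ha hr _)]

lemma integrable_gammaMeasure_iff (ha : 0 < a) (hr : 0 < r) {f : ℝ → E} :
    Integrable f (gammaMeasure a r) ↔ Integrable fun x => gammaPDFReal a r x • f x := by
  rw [gammaMeasure_eq_withDensity_toNNReal,
    integrable_withDensity_iff_integrable_smul (measurable_gammaPDFReal a r).real_toNNReal]
  simp only [NNReal.smul_def, Real.coe_toNNReal _ (gammaPDFReal_nonneg ha hr _)]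

lemma gammaPDFReal_one (ν : ℝ) :
    gammaPDFReal ν 1 = (Ici 0).indicator fun x => x ^ (ν - 1) * exp (-x) / Gamma ν := by
  ext x
  by_cases hx : 0 ≤ x <;> simp [gammaPDFReal, hx]
  ring

lemma integral_gammaMeasure_one {ν : ℝ} (hν : 0 < ν) (f : ℝ → ℝ) :
    ∫ x, f x ∂gammaMeasure ν 1 = ∫ x in Ioi 0, f x * (x ^ (ν - 1) * exp (-x) / Gamma ν) := by
  rw [integral_gammaMeasure hν one_pos, ← integral_Ici_eq_integral_Ioi,
    ← integral_indicator measurableSet_Ici, gammaPDFReal_one]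
  congr 1 with x
  by_cases hx : 0 ≤ x <;> simp [hx, mul_comm]

lemma integrable_gammaMeasure_one_iff {ν : ℝ} (hν : 0 < ν) {f : ℝ → ℝ} :
    Integrable f (gammaMeasure ν 1) ↔
      IntegrableOn (fun x => f x * (x ^ (ν - 1) * exp (-x) / Gamma ν)) (Ioi 0) := by
  rw [integrable_gammaMeasure_iff hν one_pos, ← integrableOn_Ici_iff_integrableOn_Ioi,
    ← integrable_indicator_iff measurableSet_Ici, gammaPDFReal_one]
  refine integrable_congr (.of_forall fun x => ?_)
  by_cases hx : 0 ≤ x <;> simp [hx, mul_comm]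

end gammaMeasure

lemma integrable_log_pow_gammaMeasure (n : ℕ) {ν : ℝ} (hν : 0 < ν) :
    Integrable (fun x => log x ^ n) (gammaMeasure ν 1) := by
  rw [integrable_gammaMeasure_one_iff hν]
  simp only [← mul_div_assoc]
  exact (integrableOn_log_pow_mul_rpow_mul_exp n hν).div_const _

lemma integral_log_pow_gammaMeasure (n : ℕ) {ν : ℝ} (hν : 0 < ν) :
    ∫ x, log x ^ n ∂gammaMeasure ν 1 = logPowGammaIntegral n ν / Gamma ν := by
  rw [integral_gammaMeasure_one hν]
  simp only [← mul_div_assoc, integral_div, logPowGammaIntegral]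

/-- For `X ~ Gamma(ν, 1)`, `log X` is integrable and square-integrable,
`E[log X] = Ψ₀(ν) = Γ'(ν)/Γ(ν)` and `Var[log X] = Ψ₁(ν) = Ψ₀'(ν)`; equivalently
`∫₀^∞ (log x) x^{ν-1} e^{-x} dx = Γ'(ν)` and the variance integral equals the derivative
of the digamma function at `ν`. -/
theorem stmt_4 (ν : ℝ) (hν : 0 < ν) :
    Integrable Real.log (gammaMeasure ν 1) ∧
    MemLp Real.log 2 (gammaMeasure ν 1) ∧
    (∫ x, Real.log x ∂(gammaMeasure ν 1) = deriv Real.Gamma ν / Real.Gamma ν) ∧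
    (variance Real.log (gammaMeasure ν 1)
        = deriv (fun t : ℝ => deriv Real.Gamma t / Real.Gamma t) ν) ∧
    (∫ x in Set.Ioi (0 : ℝ), Real.log x * x ^ (ν - 1) * Real.exp (-x)
        = deriv Real.Gamma ν) ∧
    (∫ x in Set.Ioi (0 : ℝ),
        (Real.log x - deriv Real.Gamma ν / Real.Gamma ν) ^ 2
          * (x ^ (ν - 1) * Real.exp (-x) / Real.Gamma ν)
        = deriv (fun t : ℝ => deriv Real.Gamma t / Real.Gamma t) ν) := by
  have := isProbabilityMeasure_gammaMeasure hν one_pos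
  have hΓ' := (hasDerivAt_Gamma_eq_logPowGammaIntegral hν).deriv
  have hlog : Integrable log (gammaMeasure ν 1) := by
    simpa using integrable_log_pow_gammaMeasure 1 hν
  have hlog2 : MemLp log 2 (gammaMeasure ν 1) :=
    (memLp_two_iff_integrable_sq measurable_log.aestronglyMeasurable).2
      (integrable_log_pow_gammaMeasure 2 hν)
  have hmean : ∫ x, log x ∂gammaMeasure ν 1 = deriv Gamma ν / Gamma ν := by
    simpa [hΓ'] using integral_log_pow_gammaMeasure 1 hν
  have hvar : variance log (gammaMeasure ν 1) = deriv (fun t => deriv Gamma t / Gamma t) ν := by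
    rw [variance_eq_sub hlog2, deriv_logDeriv_Gamma hν, ← integral_log_pow_gammaMeasure 2 hν,
      hmean, hΓ']
    rfl
  refine ⟨hlog, hlog2, hmean, hvar, ?_, ?_⟩
  · rw [hΓ', logPowGammaIntegral]
    simp only [pow_one, mul_assoc]
  · rw [← integral_gammaMeasure_one hν, ← hvar, variance_eq_integral hlog2.aemeasurable, hmean]
end

section
/- For every real a > 1 and every integer k ≥ 1 there exists a constant C > 0 such that for every integer n ≥ 1, with ν_n = √n + 1/2, ∫_{−a}^{a} |y|^k e^{ν_n(1−y) − √n e^{−y}} dy ≤ C n^{−(k+1)/4}. -/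
open Real intervalIntegral

/-!
On `[-a, a]` one has `e^{-y} + y - 1 ≥ y² / (4a)`, so the exponent `ν_n (1 - y) - √n e^{-y}` is at
most `(1 + a) / 2 - b y²` with `b = √n / (4a)`. The integral is therefore dominated by the Gaussian
moment `∫ |y|^k e^{-b y²} dy = Γ((k + 1) / 2) b^{-(k + 1) / 2}`, which is of order `n^{-(k + 1) / 4}`.
-/

theorem sq_div_four_le_exp_neg_add_sub_one {y : ℝ} (hy : y ≤ 2) :
    y ^ 2 / 4 ≤ exp (-y) + y - 1 := by
  -- square `1 - y / 2 ≤ e^{-y/2}`, both sides being nonnegative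
  have h := add_one_le_exp (-y / 2)
  have hsq : exp (-y) = exp (-y / 2) ^ 2 := by rw [← exp_nat_mul]; ring_nf
  nlinarith

theorem sq_div_four_mul_le_exp_neg_add_sub_one {a y : ℝ} (ha : 1 ≤ a) (hy : y ≤ a) :
    y ^ 2 / (4 * a) ≤ exp (-y) + y - 1 := by
  rcases le_or_gt y 2 with hy2 | hy2
  · calc y ^ 2 / (4 * a) ≤ y ^ 2 / 4 := by gcongr; linarith
      _ ≤ exp (-y) + y - 1 := sq_div_four_le_exp_neg_add_sub_one hy2
  · rw [div_le_iff₀ (by linarith)]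
    nlinarith [exp_pos (-y)]

theorem add_half_mul_one_sub_sub_mul_exp_neg_le {a s y : ℝ} (ha : 1 ≤ a) (hs : 0 ≤ s)
    (hy : y ∈ Set.Icc (-a) a) :
    (s + 1 / 2) * (1 - y) - s * exp (-y) ≤ (1 + a) / 2 - s / (4 * a) * y ^ 2 := by
  have key : s / (4 * a) * y ^ 2 ≤ s * (exp (-y) + y - 1) := by
    rw [div_mul_eq_mul_div, mul_div_assoc]
    exact mul_le_mul_of_nonneg_left (sq_div_four_mul_le_exp_neg_add_sub_one ha hy.2) hs
  linear_combination key + hy.1 / 2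

theorem integrable_abs_pow_mul_exp_neg_mul_sq {b : ℝ} (hb : 0 < b) (k : ℕ) :
    MeasureTheory.Integrable fun x : ℝ => |x| ^ k * exp (-b * x ^ 2) := by
  have := (integrable_rpow_mul_exp_neg_mul_sq hb (s := k)
    (neg_one_lt_zero.trans_le k.cast_nonneg)).norm
  simpa only [Real.norm_eq_abs, abs_mul, abs_exp, abs_pow, rpow_natCast] using this

theorem integral_abs_pow_mul_exp_neg_mul_sq {b : ℝ} (hb : 0 < b) (k : ℕ) :
    ∫ x : ℝ, |x| ^ k * exp (-b * x ^ 2) =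
      b ^ (-((k : ℝ) + 1) / 2) * Gamma (((k : ℝ) + 1) / 2) := by
  have h := integral_comp_abs (f := fun t : ℝ => t ^ (k : ℝ) * exp (-b * t ^ (2 : ℝ)))
  rw [integral_rpow_mul_exp_neg_mul_rpow two_pos (neg_one_lt_zero.trans_le k.cast_nonneg) hb] at h
  simp only [rpow_natCast, rpow_two, sq_abs] at h
  rw [h]
  ring

theorem intervalIntegral_abs_pow_mul_exp_neg_mul_sq_le {b : ℝ} (hb : 0 < b) (k : ℕ)
    {a₁ a₂ : ℝ} (h : a₁ ≤ a₂) :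
    ∫ x in a₁..a₂, |x| ^ k * exp (-b * x ^ 2) ≤
      b ^ (-((k : ℝ) + 1) / 2) * Gamma (((k : ℝ) + 1) / 2) := by
  rw [integral_of_le h, ← integral_abs_pow_mul_exp_neg_mul_sq hb]
  exact MeasureTheory.setIntegral_le_integral (integrable_abs_pow_mul_exp_neg_mul_sq hb k)
    (.of_forall fun x => by positivity)

theorem stmt_8_general (a : ℝ) (ha : 1 < a) (k : ℕ) :
    ∃ C : ℝ, 0 < C ∧ ∀ n : ℕ, 1 ≤ n →
      ∫ y in (-a)..a,
          |y| ^ k * Real.exp ((Real.sqrt n + 1 / 2) * (1 - y) - Real.sqrt n * Real.exp (-y))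
        ≤ C * (n : ℝ) ^ (-((k : ℝ) + 1) / 4) := by
  have ha₀ : 0 < a := by linarith
  have hΓ : 0 < Gamma (((k : ℝ) + 1) / 2) := Gamma_pos_of_pos (by positivity)
  refine ⟨exp ((1 + a) / 2) * (4 * a) ^ (((k : ℝ) + 1) / 2) * Gamma (((k : ℝ) + 1) / 2),
    by positivity, fun n hn => ?_⟩
  have hn₀ : (0 : ℝ) < n := by exact_mod_cast hn
  set b := √n / (4 * a)
  have hb : 0 < b := by positivity
  have hbpow : b ^ (-((k : ℝ) + 1) / 2) =
      (4 * a) ^ (((k : ℝ) + 1) / 2) * (n : ℝ) ^ (-((k : ℝ) + 1) / 4) := by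
    rw [div_rpow (sqrt_nonneg _) (by positivity), sqrt_eq_rpow, ← rpow_mul hn₀.le,
      div_eq_mul_inv, ← rpow_neg (by positivity)]
    ring_nf
  have hpointwise : ∀ y ∈ Set.Icc (-a) a,
      |y| ^ k * exp ((√n + 1 / 2) * (1 - y) - √n * exp (-y)) ≤
        exp ((1 + a) / 2) * (|y| ^ k * exp (-b * y ^ 2)) := by
    intro y hy
    rw [mul_left_comm, ← exp_add]
    gcongr
    linarith [add_half_mul_one_sub_sub_mul_exp_neg_le ha.le (sqrt_nonneg n) hy]
  calc _ ≤ ∫ y in (-a)..a, exp ((1 + a) / 2) * (|y| ^ k * exp (-b * y ^ 2)) :=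
        integral_mono_on (by linarith) ((by fun_prop : Continuous _).intervalIntegrable _ _)
          ((by fun_prop : Continuous _).intervalIntegrable _ _) hpointwise
    _ ≤ exp ((1 + a) / 2) * (b ^ (-((k : ℝ) + 1) / 2) * Gamma (((k : ℝ) + 1) / 2)) := by
        rw [integral_const_mul]
        gcongr
        exact intervalIntegral_abs_pow_mul_exp_neg_mul_sq_le hb k (by linarith)
    _ = _ := by rw [hbpow]; ring

/-- For every `a > 1` and integer `k ≥ 1` there is `C > 0` with
`∫_{-a}^{a} |y|^k e^{ν_n(1-y) - √n e^{-y}} dy ≤ C n^{-(k+1)/4}` for all `n ≥ 1`,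
where `ν_n = √n + 1/2`. -/
theorem stmt_8 (a : ℝ) (ha : 1 < a) (k : ℕ) (hk : 1 ≤ k) :
    ∃ C : ℝ, 0 < C ∧ ∀ n : ℕ, 1 ≤ n →
      ∫ y in (-a)..a,
          |y| ^ k * Real.exp ((Real.sqrt n + 1 / 2) * (1 - y) - Real.sqrt n * Real.exp (-y))
        ≤ C * (n : ℝ) ^ (-((k : ℝ) + 1) / 4) :=
  stmt_8_general a ha k
end

section
/- For every real a > 1 and every c > 0 there exist constants C > 0, c₂ > 0 and an integer n₀ ≥ 1 such that for every integer n ≥ n₀, with ν_n = √n + 1/2, ∫_{a}^{∞} e^{c y} e^{ν_n(1−y) − √n e^{−y}} dy ≤ C ν_n^{−1} e^{−c₂ ν_n (a−1)}. -/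
open MeasureTheory Real

/-!
Dropping the nonpositive term `-√n e^{-y}` bounds the integrand by `e^{ν} e^{-(ν - c) y}`, whose
integral over `(a, ∞)` is `e^{c} e^{-(ν - c)(a - 1)} / (ν - c)`. Once `√n ≥ 2c` we have
`ν - c ≥ ν / 2`, giving the claim with `C = 2 e^{c}` and `c₂ = 1 / 2`.
-/

lemma exp_mul_mul_exp_sub_le (c ν s y : ℝ) (hs : 0 ≤ s) :
    exp (c * y) * exp (ν * (1 - y) - s * exp (-y)) ≤ exp ν * exp ((c - ν) * y) := by
  rw [← exp_add, ← exp_add, exp_le_exp]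
  nlinarith [mul_nonneg hs (exp_pos (-y)).le]

lemma setIntegral_Ioi_exp_mul_mul_exp_sub_le (a c ν s : ℝ) (hcν : c < ν) (hs : 0 ≤ s) :
    ∫ y in Set.Ioi a, exp (c * y) * exp (ν * (1 - y) - s * exp (-y))
      ≤ exp c * exp (-(ν - c) * (a - 1)) / (ν - c) := by
  have hneg : c - ν < 0 := by linarith
  calc ∫ y in Set.Ioi a, exp (c * y) * exp (ν * (1 - y) - s * exp (-y))
      ≤ ∫ y in Set.Ioi a, exp ν * exp ((c - ν) * y) :=
        integral_mono_of_nonneg (.of_forall fun _ => by positivity)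
          ((integrableOn_exp_mul_Ioi hneg a).const_mul _)
          (.of_forall fun y => exp_mul_mul_exp_sub_le c ν s y hs)
    _ = exp ν * (-exp ((c - ν) * a) / (c - ν)) := by
        rw [integral_const_mul, integral_exp_mul_Ioi hneg]
    _ = exp c * exp (-(ν - c) * (a - 1)) / (ν - c) := by
        rw [neg_div, ← div_neg, neg_sub, ← mul_div_assoc, ← exp_add, ← exp_add]
        ring_nf

lemma exp_neg_mul_div_sub_le (a c ν : ℝ) (ha : 1 ≤ a) (hν : 0 < ν) (hcν : 2 * c ≤ ν) :
    exp (-(ν - c) * (a - 1)) / (ν - c) ≤ 2 * ν⁻¹ * exp (-(1 / 2) * ν * (a - 1)) := by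
  have hνc : 0 < ν - c := by linarith
  have hexp : exp (-(ν - c) * (a - 1)) ≤ exp (-(1 / 2) * ν * (a - 1)) :=
    exp_le_exp.mpr (by nlinarith)
  have hinv : (ν - c)⁻¹ ≤ 2 * ν⁻¹ := by
    rw [← div_eq_mul_inv, inv_le_comm₀ hνc (by positivity), inv_div]
    linarith
  rw [div_eq_mul_inv, mul_comm]
  exact mul_le_mul hinv hexp (exp_pos _).le (by positivity)

lemma two_mul_le_sqrt_of_ceil_le {c : ℝ} {n : ℕ} (hn : ⌈4 * c ^ 2⌉₊ ≤ n) : 2 * c ≤ √n := by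
  have hsq : (2 * c) ^ 2 ≤ n := by
    have := (Nat.le_ceil (4 * c ^ 2)).trans (Nat.cast_le.mpr hn)
    linarith
  exact (le_abs_self _).trans (abs_le_sqrt hsq)

theorem stmt_9_general (a c : ℝ) (ha : 1 < a) :
    ∃ (C c₂ : ℝ) (n₀ : ℕ), 0 < C ∧ 0 < c₂ ∧ 1 ≤ n₀ ∧ ∀ n : ℕ, n₀ ≤ n →
      ∫ y in Set.Ioi a,
          Real.exp (c * y)
            * Real.exp ((Real.sqrt n + 1 / 2) * (1 - y) - Real.sqrt n * Real.exp (-y))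
        ≤ C * (Real.sqrt n + 1 / 2)⁻¹
            * Real.exp (-c₂ * (Real.sqrt n + 1 / 2) * (a - 1)) := by
  refine ⟨2 * exp c, 1 / 2, max 1 ⌈4 * c ^ 2⌉₊, by positivity, by norm_num, le_max_left _ _,
    fun n hn => ?_⟩
  have hsqrt : 2 * c ≤ √n := two_mul_le_sqrt_of_ceil_le ((le_max_right _ _).trans hn)
  have hν : 0 < √n + 1 / 2 := by positivity
  calc _ ≤ exp c * exp (-(√n + 1 / 2 - c) * (a - 1)) / (√n + 1 / 2 - c) :=
        setIntegral_Ioi_exp_mul_mul_exp_sub_le a c _ _ (by linarith) (sqrt_nonneg _)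
    _ ≤ exp c * (2 * (√n + 1 / 2)⁻¹ * exp (-(1 / 2) * (√n + 1 / 2) * (a - 1))) := by
        rw [mul_div_assoc]
        gcongr
        exact exp_neg_mul_div_sub_le a c _ ha.le hν (by linarith)
    _ = _ := by ring

/-- For every `a > 1`, `c > 0` there are `C > 0`, `c₂ > 0` and `n₀ ≥ 1`
such that for all `n ≥ n₀`, with `ν_n = √n + 1/2`,
`∫_a^∞ e^{cy} e^{ν_n(1-y) - √n e^{-y}} dy ≤ C ν_n⁻¹ e^{-c₂ ν_n (a-1)}`. -/
theorem stmt_9 (a c : ℝ) (ha : 1 < a) (hc : 0 < c) :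
    ∃ (C c₂ : ℝ) (n₀ : ℕ), 0 < C ∧ 0 < c₂ ∧ 1 ≤ n₀ ∧ ∀ n : ℕ, n₀ ≤ n →
      ∫ y in Set.Ioi a,
          Real.exp (c * y)
            * Real.exp ((Real.sqrt n + 1 / 2) * (1 - y) - Real.sqrt n * Real.exp (-y))
        ≤ C * (Real.sqrt n + 1 / 2)⁻¹
            * Real.exp (-c₂ * (Real.sqrt n + 1 / 2) * (a - 1)) :=
  stmt_9_general a c ha
end

section
/- For every real a > 1 and every c > 0 there exist constants C > 0, c₃ > 0 and an integer n₀ ≥ 1 such that for every integer n ≥ n₀, with ν_n = √n + 1/2, ∫_{−∞}^{−a} e^{c|y|} e^{ν_n(1−y) − √n e^{−y}} dy ≤ C ν_n^{−1} e^{−c₃ ν_n e^{a}}. -/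
/-!
Put `ν = √n + 1/2` and `y = -a - s` with `s ≥ 0`. Since `e^{-y} = e^a e^s ≥ e^a (1 + s)`, the
exponent `c|y| + ν(1 - y) - √n e^{-y}` is at most an affine function of `s` whose constant term
is `-ν(e^a - 1 - a) + O(1)` and whose slope is `-ν(e^a - 2) + O(1)`. For `n` large it is therefore
at most `-ν(e^a - 1 - a)/2 - νs`, and integrating `e^{-νs}` over `s ≥ 0` gives the factor `ν⁻¹`;
so `C = 1` and `c₃ = (e^a - 1 - a) / (2 e^a)`.
-/

open MeasureTheory Real

lemma integral_exp_mul_sub_Iio {ν : ℝ} (hν : 0 < ν) (b : ℝ) :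
    ∫ y in Set.Iio b, exp (ν * (y - b)) = ν⁻¹ := by
  simp_rw [mul_sub, sub_eq_add_neg, exp_add, ← integral_Iic_eq_integral_Iio, integral_mul_const,
    integral_exp_mul_Iic hν, div_mul_eq_mul_div, ← exp_add, add_neg_cancel, exp_zero, one_div]

lemma setIntegral_Iio_le_of_norm_le_exp_mul {f : ℝ → ℝ} {b ν K : ℝ} (hν : 0 < ν)
    (hf : Continuous f) (hbound : ∀ y < b, ‖f y‖ ≤ K * exp (ν * (y - b))) :
    ∫ y in Set.Iio b, f y ≤ K * ν⁻¹ := by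
  have hg : IntegrableOn (fun y => K * exp (ν * (y - b))) (Set.Iio b) := by
    simp_rw [mul_sub, sub_eq_add_neg, exp_add]
    exact (((integrableOn_exp_mul_Iic hν b).mono_set Set.Iio_subset_Iic_self).mul_const _).const_mul
      _
  have hfg : ∀ y ∈ Set.Iio b, f y ≤ K * exp (ν * (y - b)) := fun y hy =>
    (le_abs_self _).trans (hbound y hy)
  calc ∫ y in Set.Iio b, f y ≤ ∫ y in Set.Iio b, K * exp (ν * (y - b)) :=
        setIntegral_mono_on (hg.mono' hf.aestronglyMeasurable
          ((ae_restrict_mem measurableSet_Iio).mono hbound)) hg measurableSet_Iio hfg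
    _ = K * ν⁻¹ := by rw [integral_const_mul, integral_exp_mul_sub_Iio hν]

lemma exponent_le_of_lt_neg {a c r y : ℝ} (ha : 0 ≤ a) (hr : 0 ≤ r) (hy : y < -a)
    (h₁ : 2 * c * a + exp a ≤ (r + 1 / 2) * (exp a - 1 - a))
    (h₂ : c + exp a / 2 ≤ (r + 1 / 2) * (exp a - 2)) :
    c * |y| + ((r + 1 / 2) * (1 - y) - r * exp (-y))
      ≤ -((r + 1 / 2) * (exp a - 1 - a) / 2) + (r + 1 / 2) * (y - -a) := by
  obtain ⟨s, hs, rfl⟩ : ∃ s, 0 ≤ s ∧ y = -a - s := ⟨-a - y, by linarith, by ring⟩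
  have habs : |-a - s| = a + s := by rw [abs_of_neg (by linarith)]; ring
  have hexp : exp a * (1 + s) ≤ exp (-(-a - s)) := by
    rw [neg_sub, sub_neg_eq_add, add_comm s a, exp_add]
    exact mul_le_mul_of_nonneg_left (by linarith [add_one_le_exp s]) (exp_pos a).le
  rw [habs]
  linarith [mul_le_mul_of_nonneg_left hexp hr, mul_le_mul_of_nonneg_right h₂ hs]

theorem stmt_10_general (a c : ℝ) (ha : 1 < a) :
    ∃ (C c₃ : ℝ) (n₀ : ℕ), 0 < C ∧ 0 < c₃ ∧ 1 ≤ n₀ ∧ ∀ n : ℕ, n₀ ≤ n →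
      ∫ y in Set.Iio (-a),
          Real.exp (c * |y|)
            * Real.exp ((Real.sqrt n + 1 / 2) * (1 - y) - Real.sqrt n * Real.exp (-y))
        ≤ C * (Real.sqrt n + 1 / 2)⁻¹
            * Real.exp (-c₃ * (Real.sqrt n + 1 / 2) * Real.exp a) := by
  have hE₁ : 0 < exp a - 1 - a := by linarith [add_one_lt_exp (by positivity : a ≠ 0)]
  have hE₂ : 0 < exp a - 2 := by linarith [add_one_lt_exp (by positivity : a ≠ 0)]
  have hν : Filter.Tendsto (fun n : ℕ => √n + 1 / 2) Filter.atTop Filter.atTop :=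
    Filter.tendsto_atTop_add_const_right _ _
      (tendsto_sqrt_atTop.comp tendsto_natCast_atTop_atTop)
  obtain ⟨N, hN⟩ := Filter.eventually_atTop.1 <|
    ((hν.atTop_mul_const hE₁).eventually_ge_atTop (2 * c * a + exp a)).and
      ((hν.atTop_mul_const hE₂).eventually_ge_atTop (c + exp a / 2))
  refine ⟨1, (exp a - 1 - a) / (2 * exp a), max N 1, one_pos, by positivity, le_max_right _ _,
    fun n hn => ?_⟩
  obtain ⟨h₁, h₂⟩ := hN n (le_of_max_le_left hn)
  have hc₃ : -((exp a - 1 - a) / (2 * exp a)) * (√n + 1 / 2) * exp a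
      = -((√n + 1 / 2) * (exp a - 1 - a) / 2) := by
    field_simp
  rw [hc₃, one_mul, mul_comm (√n + 1 / 2)⁻¹]
  refine setIntegral_Iio_le_of_norm_le_exp_mul (by positivity) ?_ fun y hy => ?_
  · fun_prop
  rw [norm_of_nonneg (by positivity), ← exp_add, ← exp_add]
  exact exp_le_exp.2 (exponent_le_of_lt_neg (by linarith) (sqrt_nonneg _) hy h₁ h₂)

/-- For every `a > 1`, `c > 0` there are `C > 0`, `c₃ > 0` and `n₀ ≥ 1`
such that for all `n ≥ n₀`, with `ν_n = √n + 1/2`,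
`∫_{-∞}^{-a} e^{c|y|} e^{ν_n(1-y) - √n e^{-y}} dy ≤ C ν_n⁻¹ e^{-c₃ ν_n e^a}`. -/
theorem stmt_10 (a c : ℝ) (ha : 1 < a) (hc : 0 < c) :
    ∃ (C c₃ : ℝ) (n₀ : ℕ), 0 < C ∧ 0 < c₃ ∧ 1 ≤ n₀ ∧ ∀ n : ℕ, n₀ ≤ n →
      ∫ y in Set.Iio (-a),
          Real.exp (c * |y|)
            * Real.exp ((Real.sqrt n + 1 / 2) * (1 - y) - Real.sqrt n * Real.exp (-y))
        ≤ C * (Real.sqrt n + 1 / 2)⁻¹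
            * Real.exp (-c₃ * (Real.sqrt n + 1 / 2) * Real.exp a) :=
  stmt_10_general a c ha
end

section
/- Let l ≥ 1 be an integer and let (Y_j)_{j∈ℤ} be real square-integrable random variables with E[Y_j] = 0 for all j, such that Y_j and Y_k are independent whenever |j − k| ≥ l. Then for every finitely supported φ : ℤ → ℝ, E[(Σ_{j∈ℤ} Y_j φ_j)²] ≤ l Σ_{j∈ℤ} E[Y_j²] φ_j². -/
/-!
Split the indices into the `l` residue classes modulo `l`. Inside one class any two distinct
indices are at distance at least `l`, so the centered summands are pairwise independent and the
second moment of their sum is the sum of the second moments. Cauchy–Schwarz over the `l` classes,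
`(∑ᵣ Tᵣ)² ≤ l ∑ᵣ Tᵣ²` with `Tᵣ` the partial sum over the `r`-th class, costs exactly the factor `l`.
-/

open MeasureTheory ProbabilityTheory Finset

section

variable {Ω ι : Type*} [MeasurableSpace Ω] {μ : Measure Ω} [IsProbabilityMeasure μ] {X : ι → Ω → ℝ}

theorem integral_sq_sum_of_pairwise_indepFun {t : Finset ι} (hL2 : ∀ i ∈ t, MemLp (X i) 2 μ)
    (hmean : ∀ i ∈ t, ∫ ω, X i ω ∂μ = 0)
    (hindep : (t : Set ι).Pairwise fun i j => IndepFun (X i) (X j) μ) :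
    ∫ ω, (∑ i ∈ t, X i ω) ^ 2 ∂μ = ∑ i ∈ t, ∫ ω, X i ω ^ 2 ∂μ := by
  have hsum_mean : ∫ ω, ∑ i ∈ t, X i ω ∂μ = 0 := by
    rw [integral_finsetSum t fun i hi => (hL2 i hi).integrable one_le_two]
    exact sum_eq_zero hmean
  have hsum_meas : AEMeasurable (fun ω => ∑ i ∈ t, X i ω) μ :=
    (memLp_finsetSum t hL2).aestronglyMeasurable.aemeasurable
  rw [← variance_of_integral_eq_zero hsum_meas hsum_mean, ← sum_fn,
    IndepFun.variance_sum hL2 hindep]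
  exact sum_congr rfl fun i hi =>
    variance_of_integral_eq_zero (hL2 i hi).aestronglyMeasurable.aemeasurable (hmean i hi)

theorem sq_sum_le_card_mul_sum_sq_fiberwise {κ : Type*} [Fintype κ] [DecidableEq κ]
    (s : Finset ι) (g : ι → κ) (a : ι → ℝ) :
    (∑ i ∈ s, a i) ^ 2 ≤ Fintype.card κ * ∑ r, (∑ i ∈ s with g i = r, a i) ^ 2 := by
  rw [← sum_fiberwise s g a]
  exact sq_sum_le_card_mul_sum_sq

theorem integral_sq_sum_le_card_mul_of_indepFun_on_fibers {κ : Type*} [Fintype κ] [DecidableEq κ]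
    {s : Finset ι} (g : ι → κ) (hL2 : ∀ i ∈ s, MemLp (X i) 2 μ)
    (hmean : ∀ i ∈ s, ∫ ω, X i ω ∂μ = 0)
    (hindep : ∀ i ∈ s, ∀ j ∈ s, i ≠ j → g i = g j → IndepFun (X i) (X j) μ) :
    ∫ ω, (∑ i ∈ s, X i ω) ^ 2 ∂μ ≤ Fintype.card κ * ∑ i ∈ s, ∫ ω, X i ω ^ 2 ∂μ := by
  have hfiber_L2 (r : κ) : MemLp (fun ω => ∑ i ∈ s with g i = r, X i ω) 2 μ :=
    memLp_finsetSum _ fun i hi => hL2 i (mem_filter.1 hi).1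
  calc ∫ ω, (∑ i ∈ s, X i ω) ^ 2 ∂μ
      ≤ ∫ ω, Fintype.card κ * ∑ r, (∑ i ∈ s with g i = r, X i ω) ^ 2 ∂μ :=
        integral_mono (memLp_finsetSum s hL2).integrable_sq
          ((integrable_finsetSum _ fun r _ => (hfiber_L2 r).integrable_sq).const_mul _)
          fun ω => sq_sum_le_card_mul_sum_sq_fiberwise s g (X · ω)
    _ = Fintype.card κ * ∑ r, ∫ ω, (∑ i ∈ s with g i = r, X i ω) ^ 2 ∂μ := by
        rw [integral_const_mul, integral_finsetSum _ fun r _ => (hfiber_L2 r).integrable_sq]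
    _ = Fintype.card κ * ∑ r, ∑ i ∈ s with g i = r, ∫ ω, X i ω ^ 2 ∂μ := by
        congr 1
        refine sum_congr rfl fun r _ => integral_sq_sum_of_pairwise_indepFun
          (fun i hi => hL2 i (mem_filter.1 hi).1) (fun i hi => hmean i (mem_filter.1 hi).1) ?_
        intro i hi j hj hij
        simp only [coe_filter, Set.mem_ofPred_eq] at hi hj
        exact hindep i hi.1 j hj.1 hij (hi.2.trans hj.2.symm)
    _ = Fintype.card κ * ∑ i ∈ s, ∫ ω, X i ω ^ 2 ∂μ := by
        rw [sum_fiberwise s g]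

end

theorem le_abs_sub_of_intCast_eq {l : ℕ} {i j : ℤ} (hij : i ≠ j) (h : (i : ZMod l) = j) :
    (l : ℤ) ≤ |i - j| :=
  Int.le_of_dvd (abs_pos.2 (sub_ne_zero.2 hij))
    ((dvd_abs _ _).2 ((ZMod.intCast_eq_intCast_iff_dvd_sub j i l).1 h.symm))

theorem stmt_17_general {Ω : Type*} [MeasurableSpace Ω] (μ : Measure Ω) [IsProbabilityMeasure μ]
    (l : ℕ) (hl : 1 ≤ l) (Y : ℤ → Ω → ℝ)
    (hL2 : ∀ j, MemLp (Y j) 2 μ)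
    (hmean : ∀ j, ∫ ω, Y j ω ∂μ = 0)
    (hindep : ∀ j k : ℤ, (l : ℤ) ≤ |j - k| → IndepFun (Y j) (Y k) μ)
    (φ : ℤ → ℝ) (hφ : (Function.support φ).Finite) :
    ∫ ω, (∑ᶠ j : ℤ, Y j ω * φ j) ^ 2 ∂μ
      ≤ (l : ℝ) * ∑ᶠ j : ℤ, (∫ ω, (Y j ω) ^ 2 ∂μ) * φ j ^ 2 := by
  have : NeZero l := ⟨by omega⟩
  have hsupp : Function.support φ ⊆ hφ.toFinset := hφ.coe_toFinset.symm.subset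
  have hsupp_sq : (Function.support fun j => φ j ^ 2) ⊆ hφ.toFinset := by
    rwa [Function.support_pow _ two_ne_zero]
  simp only [
    finsum_eq_sum_of_support_subset _ ((Function.support_mul_subset_right _ _).trans hsupp),
    finsum_eq_sum_of_support_subset _ ((Function.support_mul_subset_right _ _).trans hsupp_sq)]
  calc ∫ ω, (∑ j ∈ hφ.toFinset, Y j ω * φ j) ^ 2 ∂μ
      ≤ Fintype.card (ZMod l) * ∑ j ∈ hφ.toFinset, ∫ ω, (Y j ω * φ j) ^ 2 ∂μ :=
        integral_sq_sum_le_card_mul_of_indepFun_on_fibers (Int.cast : ℤ → ZMod l)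
          (fun j _ => (hL2 j).mul_const (φ j))
          (fun j _ => by rw [integral_mul_const, hmean j, zero_mul])
          fun i _ j _ hij hmod => (hindep i j (le_abs_sub_of_intCast_eq hij hmod)).comp
            (measurable_id.mul_const (φ i)) (measurable_id.mul_const (φ j))
    _ = l * ∑ j ∈ hφ.toFinset, (∫ ω, Y j ω ^ 2 ∂μ) * φ j ^ 2 := by
        simp only [ZMod.card, mul_pow, integral_mul_const]

/-- If `(Y_j)_{j∈ℤ}` are centered square-integrable random variables such
that `Y_j` and `Y_k` are independent whenever `|j - k| ≥ l`, then for every finitely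
supported `φ : ℤ → ℝ`, `E[(Σ_j Y_j φ_j)²] ≤ l Σ_j E[Y_j²] φ_j²`. -/
theorem stmt_17 {Ω : Type*} [MeasurableSpace Ω] (μ : Measure Ω) [IsProbabilityMeasure μ]
    (l : ℕ) (hl : 1 ≤ l) (Y : ℤ → Ω → ℝ)
    (hmeas : ∀ j, Measurable (Y j))
    (hL2 : ∀ j, MemLp (Y j) 2 μ)
    (hmean : ∀ j, ∫ ω, Y j ω ∂μ = 0)
    (hindep : ∀ j k : ℤ, (l : ℤ) ≤ |j - k| → IndepFun (Y j) (Y k) μ)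
    (φ : ℤ → ℝ) (hφ : (Function.support φ).Finite) :
    ∫ ω, (∑ᶠ j : ℤ, Y j ω * φ j) ^ 2 ∂μ
      ≤ (l : ℝ) * ∑ᶠ j : ℤ, (∫ ω, (Y j ω) ^ 2 ∂μ) * φ j ^ 2 :=
  stmt_17_general μ l hl Y hL2 hmean hindep φ hφ
end
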